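/- Taking q-superdimensions in the decomposition R^{j₁} ⊗ R^{j₂} = ⊕ R^j is consistent: for q = e^{2πi/N}, the product sqdim(R^{j₁})·sqdim(R^{j₂}) of q-superdimensions equals the sum Σ_{|j₁−j₂| ≤ j ≤ j₁+j₂} sqdim(R^j) over half-integer steps, where sqdim(R^j) = (−1)^{2j}(q^{2j+1}+q^{−2j})/(q+1), provided all spins involved are below the cutoff. -/

import Mathlib

/-- The q-superdimension of the `U_q(osp(1|2))` representation `R^j` in twice-spin
convention (`n = 2j`): `sqdim(R^j) = (-1)^{2j} (q^{2j+1} + q^{-2j})/(q+1)`. -/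
noncomputable def sqdimQ (q : ℂ) (n : ℕ) : ℂ :=
  (-1 : ℂ) ^ n * (q ^ (n + 1) + q⁻¹ ^ n) / (q + 1)

/-!
With `x = -q` and `n = 2j`, `sqdim(R^j) = (x^{-n} - x^{n+1}) / (1 - x) = x^{-n} + ⋯ + x^n` is the
character of the `(2n+1)`-dimensional irreducible representation of `SU(2)`, so the claim is the
Clebsch–Gordan rule `χ_a χ_b = ∑_{|a-b| ≤ c ≤ a+b} χ_c`. After multiplying by `x - 1` every `χ_c`
becomes `x^{c+1} - x^{-c}`, and by the symmetry `χ_a(x) = χ_a(x⁻¹)` both sides turn into the same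
difference of two geometric sums.
-/

open Finset

section SpinCharacter

variable {K : Type*} [Field K]

def spinChar (x : K) (n : ℕ) : K :=
  x⁻¹ ^ n * ∑ k ∈ range (2 * n + 1), x ^ k

variable {x : K}

theorem spinChar_inv (hx : x ≠ 0) (n : ℕ) : spinChar x⁻¹ n = spinChar x n := by
  rw [spinChar, spinChar, inv_inv, ← sum_range_reflect, mul_sum, mul_sum]
  refine sum_congr rfl fun k hk => ?_
  have hk : k ≤ 2 * n := Nat.lt_succ_iff.mp (mem_range.mp hk)
  simp only [← zpow_natCast, inv_zpow', ← zpow_add₀ hx]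
  congr 1
  omega

theorem spinChar_mul_pow_add (hx : x ≠ 0) (a m : ℕ) :
    spinChar x a * x ^ (a + m) = ∑ j ∈ range (2 * a + 1), x ^ (m + j) := by
  rw [spinChar, mul_right_comm, inv_pow, pow_add, ← mul_assoc,
    inv_mul_cancel₀ (pow_ne_zero a hx), one_mul, mul_sum]
  simp only [pow_add]

theorem spinChar_mul_sub_one (hx : x ≠ 0) (n : ℕ) :
    spinChar x n * (x - 1) = x ^ (n + 1) - x⁻¹ ^ n := by
  rw [spinChar, mul_assoc, geom_sum_mul, mul_sub, mul_one, two_mul, add_assoc, pow_add,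
    ← mul_assoc, inv_pow, inv_mul_cancel₀ (pow_ne_zero n hx), one_mul]

theorem spinChar_mul_spinChar_add (hx : x ≠ 0) (hx1 : x ≠ 1) (a c : ℕ) :
    spinChar x a * spinChar x (a + c) = ∑ j ∈ range (2 * a + 1), spinChar x (c + j) := by
  apply mul_right_cancel₀ (sub_ne_zero.mpr hx1)
  rw [mul_assoc, spinChar_mul_sub_one hx, sum_mul]
  simp only [spinChar_mul_sub_one hx, mul_sub, sum_sub_distrib]
  congr 1
  · rw [add_assoc, spinChar_mul_pow_add hx]
    simp only [add_right_comm]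
  · rw [← spinChar_inv hx, spinChar_mul_pow_add (inv_ne_zero hx)]

theorem spinChar_mul_spinChar (hx : x ≠ 0) (hx1 : x ≠ 1) (a b : ℕ) :
    spinChar x a * spinChar x b =
      ∑ i ∈ range (2 * min a b + 1), spinChar x (a + b - i) := by
  wlog hab : a ≤ b generalizing a b
  · rw [mul_comm, min_comm, this b a (le_of_not_ge hab), add_comm b a]
  obtain ⟨c, rfl⟩ := Nat.exists_eq_add_of_le hab
  rw [min_eq_left hab, spinChar_mul_spinChar_add hx hx1, ← sum_range_reflect]
  refine sum_congr rfl fun j hj => ?_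
  have hj : j < 2 * a + 1 := mem_range.mp hj
  congr 1
  omega

end SpinCharacter

theorem sqdimQ_eq_spinChar_neg (q : ℂ) (hq0 : q ≠ 0) (hq1 : q ≠ -1) (n : ℕ) :
    sqdimQ q n = spinChar (-q) n := by
  have hq1' : q + 1 ≠ 0 := fun h => hq1 (eq_neg_of_add_eq_zero_left h)
  have hq1'' : -q - 1 ≠ 0 := by rw [← neg_add']; exact neg_ne_zero.mpr hq1'
  apply mul_right_cancel₀ hq1''
  rw [spinChar_mul_sub_one (neg_ne_zero.mpr hq0), sqdimQ]
  simp only [inv_neg, neg_pow q, neg_pow q⁻¹]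
  field_simp
  ring

/-- multiplicativity of the q-superdimension under the osp(1|2) fusion rule
`R^{j₁} ⊗ R^{j₂} = ⊕_{|j₁-j₂| ≤ j ≤ j₁+j₂} R^j` (half-integer steps), as a
rational-function identity in `q ≠ 0`, `q ≠ -1`. -/
theorem sqdim_multiplicative (q : ℂ) (hq0 : q ≠ 0) (hq1 : q ≠ -1) (a b : ℕ) :
    sqdimQ q a * sqdimQ q b =
      ∑ i ∈ Finset.range (2 * min a b + 1), sqdimQ q (a + b - i) := by
  simp only [sqdimQ_eq_spinChar_neg q hq0 hq1]
  exact spinChar_mul_spinChar (neg_ne_zero.mpr hq0) (fun h => hq1 (neg_eq_iff_eq_neg.mp h)) a b
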